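/- In the free partially commutative left regular band B(Γ) presented by a graph Γ = (V, E) with relations xy = yx for {x,y} ∈ E, two distinct generators x, y ∈ V commute in B(Γ) if and only if {x,y} ∈ E. (Equivalently, via the normal form: words v, w over V with no repeated letters represent the same element of B(Γ) iff they have the same letter set and induce the same acyclic orientation of the complement graph.) -/

import Mathlib

/-- One step of the commutation rewriting: swap two adjacent letters that are
joined by an edge of `Γ`. The congruence on the free left regular band
generated by the relations `xy = yx` for edges `{x,y}` restricts, on
duplicate-free words, to the equivalence generated by this relation. -/
def commStep {V : Type*} (G : SimpleGraph V) (u v : List V) : Prop :=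
  ∃ (p s : List V) (x y : V), G.Adj x y ∧
    u = p ++ [x, y] ++ s ∧ v = p ++ [y, x] ++ s

/-- The acyclic-orientation data of a duplicate-free word `w`: `x → y` iff `x`
precedes `y` in `w` and `{x,y}` is not an edge of `Γ`. -/
def wordOrientation {V : Type*} (G : SimpleGraph V) (w : List V) (x y : V) :
    Prop :=
  [x, y].Sublist w ∧ ¬ G.Adj x y

/-! Swapping two adjacent letters that are joined by an edge changes neither the set of letters
nor the orientation, since the only pair whose order changes is an edge. Conversely, if `a :: v`
and `w` carry the same data, then every letter `b` in front of `a` in `w` is adjacent to `a`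
(otherwise `b → a` in `w` but not in `a :: v`), so `a` can be commuted to the front of `w`;
cancelling `a` and inducting on `v` finishes the proof. -/

theorem List.pair_sublist_swap {α : Type*} {a b x y : α} {p s : List α}
    (h : [a, b].Sublist (p ++ x :: y :: s)) (hne : ¬(a = x ∧ b = y)) :
    [a, b].Sublist (p ++ y :: x :: s) := by
  induction p with
  | nil =>
    simp only [List.nil_append, List.sublist_cons_iff, List.cons.injEq] at h ⊢
    grind
  | cons c p ih =>
    rw [List.cons_append, List.sublist_cons_iff] at h ⊢
    rcases h with h | ⟨r, hr, hb⟩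
    · exact .inl (ih h)
    · obtain ⟨rfl, rfl⟩ := List.cons.inj hr
      refine .inr ⟨[b], rfl, List.singleton_sublist.mpr ?_⟩
      simpa [or_left_comm] using List.singleton_sublist.mp hb

section WordProblem

variable {V : Type*} {G : SimpleGraph V}

theorem wordOrientation_iff_cons {a : V} {w : List V} (ha : a ∉ w) (x y : V) :
    wordOrientation G w x y ↔ wordOrientation G (a :: w) x y ∧ x ≠ a := by
  simp only [wordOrientation, List.sublist_cons_iff, List.cons.injEq]
  constructor
  · rintro ⟨hxy, hn⟩
    exact ⟨⟨Or.inl hxy, hn⟩, by rintro rfl; exact ha (hxy.subset List.mem_cons_self)⟩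
  · rintro ⟨⟨hxy | ⟨r, ⟨rfl, -⟩, -⟩, hn⟩, hxa⟩
    exacts [⟨hxy, hn⟩, absurd rfl hxa]

theorem commStep_cons (a : V) {u v : List V} (h : commStep G u v) :
    commStep G (a :: u) (a :: v) := by
  obtain ⟨p, s, x, y, hxy, rfl, rfl⟩ := h
  exact ⟨a :: p, s, x, y, hxy, rfl, rfl⟩

theorem eqvGen_commStep_cons (a : V) {u v : List V} (h : Relation.EqvGen (commStep G) u v) :
    Relation.EqvGen (commStep G) (a :: u) (a :: v) := by
  induction h with
  | rel _ _ h => exact .rel _ _ (commStep_cons a h)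
  | refl => exact .refl _
  | symm _ _ _ ih => exact ih.symm
  | trans _ _ _ _ _ ih₁ ih₂ => exact ih₁.trans _ _ _ ih₂

theorem eqvGen_commStep_append_cons {a : V} {p : List V} (q : List V)
    (hp : ∀ b ∈ p, G.Adj b a) :
    Relation.EqvGen (commStep G) (p ++ a :: q) (a :: (p ++ q)) := by
  induction p with
  | nil => exact .refl _
  | cons b p ih =>
    have hswap : commStep G (b :: a :: (p ++ q)) (a :: b :: (p ++ q)) :=
      ⟨[], p ++ q, b, a, hp b List.mem_cons_self, rfl, rfl⟩
    exact (eqvGen_commStep_cons b (ih fun c hc => hp c (List.mem_cons_of_mem b hc))).trans _ _ _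
      (.rel _ _ hswap)

variable [DecidableEq V]

/-- The pair `(σ, O)` of the paper agrees on `u` and `v`. -/
def SameLettersAndOrientation (G : SimpleGraph V) (u v : List V) : Prop :=
  u.toFinset = v.toFinset ∧ ∀ x y, wordOrientation G u x y ↔ wordOrientation G v x y

theorem sameLettersAndOrientation_equivalence :
    Equivalence (SameLettersAndOrientation G) where
  refl _ := ⟨rfl, fun _ _ => Iff.rfl⟩
  symm h := ⟨h.1.symm, fun x y => (h.2 x y).symm⟩
  trans h₁ h₂ := ⟨h₁.1.trans h₂.1, fun x y => (h₁.2 x y).trans (h₂.2 x y)⟩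

theorem sameLettersAndOrientation_of_commStep {u v : List V} (h : commStep G u v) :
    SameLettersAndOrientation G u v := by
  obtain ⟨p, s, x, y, hxy, rfl, rfl⟩ := h
  simp only [List.append_assoc, List.cons_append, List.nil_append]
  refine ⟨by ext; simp [or_left_comm], fun a b => ⟨?_, ?_⟩⟩
  · rintro ⟨hab, hn⟩
    exact ⟨List.pair_sublist_swap hab (by rintro ⟨rfl, rfl⟩; exact hn hxy), hn⟩
  · rintro ⟨hab, hn⟩
    exact ⟨List.pair_sublist_swap hab (by rintro ⟨rfl, rfl⟩; exact hn hxy.symm), hn⟩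

theorem sameLettersAndOrientation_of_eqvGen_commStep {u v : List V}
    (h : Relation.EqvGen (commStep G) u v) : SameLettersAndOrientation G u v :=
  sameLettersAndOrientation_equivalence.eqvGen_iff.mp
    (h.mono fun _ _ => sameLettersAndOrientation_of_commStep)

theorem SameLettersAndOrientation.of_cons {a : V} {u v : List V} (hu : a ∉ u) (hv : a ∉ v)
    (h : SameLettersAndOrientation G (a :: u) (a :: v)) : SameLettersAndOrientation G u v := by
  refine ⟨?_, fun x y => ?_⟩
  · simpa [Finset.erase_insert, hu, hv] using congrArg (·.erase a) h.1
  · rw [wordOrientation_iff_cons hu, wordOrientation_iff_cons hv, h.2]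

theorem SameLettersAndOrientation.adj_of_sublist {a b : V} {v w : List V} (ha : a ∉ v)
    (h : SameLettersAndOrientation G (a :: v) w) (hba : [b, a].Sublist w) : G.Adj b a := by
  by_contra hn
  obtain ⟨hba', -⟩ := (h.2 b a).mpr ⟨hba, hn⟩
  rcases List.sublist_cons_iff.mp hba' with hba' | ⟨r, hr, hra⟩
  · exact ha (hba'.subset (by simp))
  · obtain ⟨-, rfl⟩ := List.cons.inj hr
    exact ha (List.singleton_sublist.mp hra)

theorem eqvGen_commStep_of_sameLettersAndOrientation {v w : List V} (hv : v.Nodup)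
    (hw : w.Nodup) (h : SameLettersAndOrientation G v w) : Relation.EqvGen (commStep G) v w := by
  induction v generalizing w with
  | nil =>
    obtain rfl : w = [] := List.toFinset_eq_empty_iff w |>.mp (by simp [← h.1])
    exact .refl _
  | cons a v ih =>
    obtain ⟨hav, hv⟩ := List.nodup_cons.mp hv
    have haw : a ∈ w := by rw [← List.mem_toFinset, ← h.1]; simp
    obtain ⟨p, q, rfl⟩ := List.append_of_mem haw
    obtain ⟨hapq, hpq⟩ := List.nodup_cons.mp (List.nodup_middle.mp hw)
    have hfront : Relation.EqvGen (commStep G) (p ++ a :: q) (a :: (p ++ q)) :=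
      eqvGen_commStep_append_cons q fun b hb => h.adj_of_sublist hav <|
        (List.singleton_sublist.mpr hb).append (List.singleton_sublist.mpr List.mem_cons_self)
    have htail : SameLettersAndOrientation G v (p ++ q) :=
      (sameLettersAndOrientation_equivalence.trans h
        (sameLettersAndOrientation_of_eqvGen_commStep hfront)).of_cons hav hapq
    exact (eqvGen_commStep_cons a (ih hv hpq htail)).trans _ _ _ hfront.symm

end WordProblem

theorem free_partially_commutative_lrb_word_problem_general (V : Type*) [DecidableEq V]
    (G : SimpleGraph V) (v w : List V)
    (hv : v.Nodup) (hw : w.Nodup) :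
    Relation.EqvGen (commStep G) v w ↔
      (v.toFinset = w.toFinset ∧
        ∀ x y : V, wordOrientation G v x y ↔ wordOrientation G w x y) :=
  ⟨sameLettersAndOrientation_of_eqvGen_commStep,
    eqvGen_commStep_of_sameLettersAndOrientation hv hw⟩

/-- Word problem for the free partially commutative left regular band `B(Γ)`:
two duplicate-free words over `V` represent the same element of `B(Γ)` iff they
have the same set of letters and induce the same acyclic orientation of the
complement graph. In particular, two distinct generators commute iff they are
adjacent in `Γ`. -/
theorem free_partially_commutative_lrb_word_problem (V : Type*) [DecidableEq V]
    [Fintype V] (G : SimpleGraph V) (v w : List V)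
    (hv : v.Nodup) (hw : w.Nodup) :
    Relation.EqvGen (commStep G) v w ↔
      (v.toFinset = w.toFinset ∧
        ∀ x y : V, wordOrientation G v x y ↔ wordOrientation G w x y) :=
  free_partially_commutative_lrb_word_problem_general V G v w hv hw
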